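/- The scheme K(φ∨ψ) → (Kφ ∨ Kψ) is not derivable in EL5: there exist formulas φ, ψ ∈ Fm (e.g., distinct propositional variables x, y) such that ⊬_{EL5} K(φ∨ψ) → (Kφ ∨ Kψ). -/

import Mathlib

/-- Formulas of the modal-epistemic language: variables, ⊥, ∧, ∨, →, □, K. -/
inductive Fm : Type
  | var : ℕ → Fm
  | bot : Fm
  | and : Fm → Fm → Fm
  | or : Fm → Fm → Fm
  | imp : Fm → Fm → Fm
  | box : Fm → Fm
  | k : Fm → Fm
  deriving DecidableEq

namespace Fm

/-- ¬φ := φ → ⊥ -/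
def neg (φ : Fm) : Fm := φ.imp .bot

/-- ⊤ := ¬⊥ -/
def top : Fm := neg .bot

/-- φ ↔ ψ := (φ→ψ) ∧ (ψ→φ) -/
def iff (φ ψ : Fm) : Fm := (φ.imp ψ).and (ψ.imp φ)

/-- Propositional identity φ ≡ ψ := □(φ→ψ) ∧ □(ψ→φ). -/
def ident (φ ψ : Fm) : Fm := ((φ.imp ψ).box).and ((ψ.imp φ).box)

/-- Substitution of `σ` for every occurrence of the variable `x`. -/
def subst (x : ℕ) (σ : Fm) : Fm → Fm
  | var n => if n = x then σ else var n
  | bot => bot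
  | and a b => and (subst x σ a) (subst x σ b)
  | or a b => or (subst x σ a) (subst x σ b)
  | imp a b => imp (subst x σ a) (subst x σ b)
  | box a => box (subst x σ a)
  | k a => k (subst x σ a)

/-- Propositional formulas (the set Fm₀): neither □ nor K occurs. -/
def IsProp : Fm → Prop
  | var _ => True
  | bot => True
  | and a b => a.IsProp ∧ b.IsProp
  | or a b => a.IsProp ∧ b.IsProp
  | imp a b => a.IsProp ∧ b.IsProp
  | box _ => False
  | k _ => False

end Fm

/-- Hilbert-style axiom schemes of intuitionistic propositional logic, with
schematic letters ranging over all formulas of `Fm` (so the derivable formulas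
are exactly the substitution instances of IPC theorems). -/
inductive IntAx : Fm → Prop
  | k (φ ψ : Fm) : IntAx (φ.imp (ψ.imp φ))
  | s (φ ψ χ : Fm) : IntAx ((φ.imp (ψ.imp χ)).imp ((φ.imp ψ).imp (φ.imp χ)))
  | andIntro (φ ψ : Fm) : IntAx (φ.imp (ψ.imp (φ.and ψ)))
  | andLeft (φ ψ : Fm) : IntAx ((φ.and ψ).imp φ)
  | andRight (φ ψ : Fm) : IntAx ((φ.and ψ).imp ψ)
  | orInl (φ ψ : Fm) : IntAx (φ.imp (φ.or ψ))
  | orInr (φ ψ : Fm) : IntAx (ψ.imp (φ.or ψ))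
  | orElim (φ ψ χ : Fm) : IntAx ((φ.imp χ).imp ((ψ.imp χ).imp ((φ.or ψ).imp χ)))
  | exfalso (φ : Fm) : IntAx (Fm.bot.imp φ)

/-- Derivability in intuitionistic propositional calculus from hypotheses `Φ`
(Hilbert style, Modus Ponens as the only rule). -/
inductive IPC (Φ : Set Fm) : Fm → Prop
  | hyp {φ} : φ ∈ Φ → IPC Φ φ
  | ax {φ} : IntAx φ → IPC Φ φ
  | mp {φ ψ} : IPC Φ (φ.imp ψ) → IPC Φ φ → IPC Φ ψ

/-- The modal logics L3, EL3⁻ (written `EL3m`), EL3, EL4, EL5. -/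
inductive ModalLogic : Type
  | L3 | EL3m | EL3 | EL4 | EL5
  deriving DecidableEq

/-- The axioms of the logic `L`:
(INT) all theorems of IPC and their substitution instances,
(A1) □(φ∨ψ)→(□φ∨□ψ), (A2) □φ→φ, (A3) □(φ→ψ)→□(□φ→□ψ);
(A7) □φ→□Kφ for the epistemic logics EL3⁻, EL3, EL4, EL5;
(A8) Kφ→¬¬φ for EL3, EL4, EL5; (A4) □φ→□□φ for EL4, EL5;
(A5) ¬□φ→□¬□φ for EL5. -/
inductive IsAxiom : ModalLogic → Fm → Prop
  | int {L : ModalLogic} {φ : Fm} : IPC ∅ φ → IsAxiom L φ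
  | a1 (L : ModalLogic) (φ ψ : Fm) :
      IsAxiom L (((φ.or ψ).box).imp ((φ.box).or (ψ.box)))
  | a2 (L : ModalLogic) (φ : Fm) : IsAxiom L ((φ.box).imp φ)
  | a3 (L : ModalLogic) (φ ψ : Fm) :
      IsAxiom L (((φ.imp ψ).box).imp (((φ.box).imp (ψ.box)).box))
  | a7 {L : ModalLogic} (φ : Fm) : L ≠ ModalLogic.L3 →
      IsAxiom L ((φ.box).imp ((φ.k).box))
  | a8 {L : ModalLogic} (φ : Fm) :
      L = ModalLogic.EL3 ∨ L = ModalLogic.EL4 ∨ L = ModalLogic.EL5 →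
      IsAxiom L ((φ.k).imp (φ.neg.neg))
  | a4 {L : ModalLogic} (φ : Fm) :
      L = ModalLogic.EL4 ∨ L = ModalLogic.EL5 →
      IsAxiom L ((φ.box).imp (φ.box.box))
  | a5 {L : ModalLogic} (φ : Fm) : L = ModalLogic.EL5 →
      IsAxiom L ((φ.box.neg).imp (φ.box.neg.box))

/-- Derivability from hypotheses `Φ` in logic `L`: hypotheses, axioms, the
theorem scheme (T) of tertium non datur, Modus Ponens, and Axiom Necessitation
(applicable only to axioms). -/
inductive Deriv (L : ModalLogic) (Φ : Set Fm) : Fm → Prop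
  | hyp {φ} : φ ∈ Φ → Deriv L Φ φ
  | ax {φ} : IsAxiom L φ → Deriv L Φ φ
  | tnd (φ : Fm) : Deriv L Φ (φ.or φ.neg)
  | mp {φ ψ} : Deriv L Φ (φ.imp ψ) → Deriv L Φ φ → Deriv L Φ ψ
  | an {φ} : IsAxiom L φ → Deriv L Φ (φ.box)

/-- ⊢_L φ : theoremhood in logic `L`. -/
def Thm (L : ModalLogic) (φ : Fm) : Prop := Deriv L ∅ φ

/-!
EL5 is sound for a two-world intuitionistic model `r ≤ w` in which every variable is false at `r`,
`□φ` holds when `φ` holds at `r` (hence at both worlds), and `K` is read intensionally: `Kφ` holds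
when `φ` holds at `r` or `φ` belongs to a fixed set `S` of formulas true at `w`. Every axiom holds
at `r`, so necessitated axioms hold everywhere, while `φ ∨ ¬φ` holds at the classical world `w`;
hence every theorem holds at `w`. With `x₀` true at `w` and `S = {x₀ ∨ x₁}`, the formula
`K(x₀ ∨ x₁)` holds at `w` but neither `Kx₀` nor `Kx₁` does.
-/

namespace Fm

variable (V : Set ℕ) (S : Set Fm)

/- `V` is the set of variables true at the top world `w`; at the root `r` all are false. -/
mutual
def TrueAtRoot : Fm → Prop
  | .var _ => False
  | .bot => False
  | .and a b => TrueAtRoot a ∧ TrueAtRoot b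
  | .or a b => TrueAtRoot a ∨ TrueAtRoot b
  | .imp a b => (TrueAtRoot a → TrueAtRoot b) ∧ (TrueAtTop a → TrueAtTop b)
  | .box a => TrueAtRoot a
  | .k a => TrueAtRoot a ∨ a ∈ S

def TrueAtTop : Fm → Prop
  | .var n => n ∈ V
  | .bot => False
  | .and a b => TrueAtTop a ∧ TrueAtTop b
  | .or a b => TrueAtTop a ∨ TrueAtTop b
  | .imp a b => TrueAtTop a → TrueAtTop b
  | .box a => TrueAtRoot a
  | .k a => TrueAtRoot a ∨ a ∈ S
end

end Fm

section TwoWorld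

open Fm

variable {V : Set ℕ} {S : Set Fm}

theorem trueAtTop_of_trueAtRoot : ∀ {φ : Fm}, TrueAtRoot V S φ → TrueAtTop V S φ
  | .var _, h => h.elim
  | .bot, h => h
  | .and _ _, h => ⟨trueAtTop_of_trueAtRoot h.1, trueAtTop_of_trueAtRoot h.2⟩
  | .or _ _, h => h.imp trueAtTop_of_trueAtRoot trueAtTop_of_trueAtRoot
  | .imp _ _, h => h.2
  | .box _, h => h
  | .k _, h => h

theorem IntAx.trueAtRoot_and_trueAtTop {φ : Fm} (h : IntAx φ) :
    TrueAtRoot V S φ ∧ TrueAtTop V S φ := by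
  cases h <;> simp only [TrueAtRoot, TrueAtTop] <;> grind [trueAtTop_of_trueAtRoot]

theorem IPC.trueAtRoot_and_trueAtTop {φ : Fm} (h : IPC ∅ φ) :
    TrueAtRoot V S φ ∧ TrueAtTop V S φ := by
  induction h with
  | hyp h => exact (Set.notMem_empty _ h).elim
  | ax h => exact h.trueAtRoot_and_trueAtTop
  | mp _ _ ihImp ih => exact ⟨ihImp.1.1 ih.1, ihImp.2 ih.2⟩

theorem IsAxiom.trueAtRoot (hS : ∀ φ ∈ S, TrueAtTop V S φ) {L : ModalLogic} {φ : Fm}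
    (h : IsAxiom L φ) : TrueAtRoot V S φ := by
  cases h with
  | int h => exact h.trueAtRoot_and_trueAtTop.1
  | _ => simp only [TrueAtRoot, TrueAtTop, Fm.neg]; grind [trueAtTop_of_trueAtRoot]

theorem Deriv.trueAtTop (hS : ∀ φ ∈ S, TrueAtTop V S φ) {L : ModalLogic} {Φ : Set Fm}
    (hΦ : ∀ φ ∈ Φ, TrueAtTop V S φ) {φ : Fm} (h : Deriv L Φ φ) : TrueAtTop V S φ := by
  induction h with
  | hyp h => exact hΦ _ h
  | ax h => exact trueAtTop_of_trueAtRoot (h.trueAtRoot hS)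
  | tnd φ => exact em (TrueAtTop V S φ)
  | mp _ _ ihImp ih => exact ihImp ih
  | an h => exact h.trueAtRoot hS

end TwoWorld

/-- the scheme K(φ∨ψ) → (Kφ ∨ Kψ) is not derivable in EL5. -/
theorem stmt_16 :
    ∃ φ ψ : Fm, ¬ Thm ModalLogic.EL5 (((φ.or ψ).k).imp ((φ.k).or (ψ.k))) := by
  let xy : Fm := (Fm.var 0).or (Fm.var 1)
  have hS : ∀ φ ∈ ({xy} : Set Fm), Fm.TrueAtTop {0} {xy} φ := by
    simp [xy, Fm.TrueAtTop]
  refine ⟨Fm.var 0, Fm.var 1, fun h => ?_⟩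
  have hw := Deriv.trueAtTop hS (fun _ h => h.elim) h
  simp [xy, Fm.TrueAtTop, Fm.TrueAtRoot] at hw
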